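/- (Master equation lemma.) In any dGBV algebra (g, ∘, d, Δ), an even nilpotent element S ∈ g₀ is a master function, i.e. satisfies d(S) + Δ(S) + ½ [S • S] = 0, if and only if (d + Δ)(e^S) = 0, where e^S := Σ_{r=0}^{N−1} S^r / r! for N with S^N = 0. -/
import Mathlib


/-- A differential Gerstenhaber–Batalin–Vilkovisky (dGBV) algebra over a field `k` of
characteristic zero: a `ℤ/2`-graded unital associative supercommutative algebra `A`
equipped with two odd operators `d` and `delta` (usually written `Δ`) satisfying
`d² = 0`, `Δ² = 0`, `dΔ + Δd = 0`, `d` an odd derivation and `Δ` of order two. -/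
structure DGBV (k A : Type*) [Field k] [CharZero k] [Ring A] [Algebra k A] where
  grading : ZMod 2 → Submodule k A
  graded : GradedAlgebra grading
  supercomm : ∀ (i j : ZMod 2), ∀ a ∈ grading i, ∀ b ∈ grading j,
    a * b = ((-1 : k) ^ (i.val * j.val)) • (b * a)
  d : A →ₗ[k] A
  delta : A →ₗ[k] A
  d_odd : ∀ (i : ZMod 2), ∀ a ∈ grading i, d a ∈ grading (i + 1)
  delta_odd : ∀ (i : ZMod 2), ∀ a ∈ grading i, delta a ∈ grading (i + 1)
  d_deriv : ∀ (i : ZMod 2), ∀ a ∈ grading i, ∀ b : A,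
    d (a * b) = d a * b + ((-1 : k) ^ i.val) • (a * d b)
  d_sq : ∀ a : A, d (d a) = 0
  delta_sq : ∀ a : A, delta (delta a) = 0
  d_delta : ∀ a : A, d (delta a) + delta (d a) = 0
  order_two : ∀ (i j l : ZMod 2), ∀ a ∈ grading i, ∀ b ∈ grading j, ∀ c ∈ grading l,
    delta (a * b * c) = delta (a * b) * c
      + ((-1 : k) ^ (j.val * (i.val + 1))) • (b * delta (a * c))
      + ((-1 : k) ^ i.val) • (a * delta (b * c))
      - delta a * (b * c)
      - ((-1 : k) ^ i.val) • (a * (delta b * c))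
      - ((-1 : k) ^ (i.val + j.val)) • (a * b * delta c)

/-- The odd bracket `[a • b] := (−1)^{|a|} Δ(a∘b) − (−1)^{|a|} Δ(a)∘b − a∘Δ(b)`, where
`pa` is the parity of the (homogeneous) element `a`. -/
def DGBV.br {k A : Type*} [Field k] [CharZero k] [Ring A] [Algebra k A]
    (S : DGBV k A) (pa : ℕ) (a b : A) : A :=
  ((-1 : k) ^ pa) • S.delta (a * b) - ((-1 : k) ^ pa) • (S.delta a * b) - a * S.delta b

namespace DGBV
variable {k A : Type*} [Field k] [CharZero k] [Ring A] [Algebra k A] (S : DGBV k A) {x : A}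

lemma pow_mem (hx : x ∈ S.grading 0) (n : ℕ) : x ^ n ∈ S.grading 0 := by
  haveI := S.graded; simpa using SetLike.pow_mem_graded n hx

lemma one_mem' : (1 : A) ∈ S.grading 0 := by
  haveI := S.graded; exact SetLike.one_mem_graded _

lemma comm_pow (hx : x ∈ S.grading 0) {j : ZMod 2} {y : A} (hy : y ∈ S.grading j) (n : ℕ) :
    y * x ^ n = x ^ n * y := by
  have h := S.supercomm j 0 y hy (x ^ n) (S.pow_mem hx n)
  simpa using h

lemma d_one : S.d 1 = 0 := by
  have h := S.d_deriv 0 1 S.one_mem' 1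
  simp only [mul_one, one_mul, ZMod.val_zero, pow_zero, one_smul] at h
  have h2 : S.d 1 + S.d 1 = S.d 1 + 0 := by rw [add_zero]; exact h.symm
  exact add_left_cancel h2

lemma delta_one : S.delta 1 = 0 := by
  have h := S.order_two 0 0 0 1 S.one_mem' 1 S.one_mem' 1 S.one_mem'
  simp only [mul_one, one_mul, ZMod.val_zero, pow_zero, one_smul] at h
  abel_nf at h
  exact h

lemma d_pow (hx : x ∈ S.grading 0) : ∀ r : ℕ, S.d (x ^ (r+1)) = ((r:k)+1) • (x ^ r * S.d x) := by
  intro r; induction r with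
  | zero => simp
  | succ r ih =>
    have hd := S.d_deriv 0 x hx (x ^ (r+1))
    have hcomm : S.d x * x ^ (r+1) = x ^ (r+1) * S.d x :=
      S.comm_pow hx (S.d_odd 0 x hx) (r+1)
    rw [show r+1+1 = r+2 from rfl, pow_succ' x (r+1), hd, ih, hcomm]
    simp only [ZMod.val_zero, pow_zero, one_smul, mul_smul_comm, ← mul_assoc, ← pow_succ']
    match_scalars <;> push_cast <;> ring

lemma delta_rec (hx : x ∈ S.grading 0) (s : ℕ) :
    S.delta (x ^ (s+2)) = x ^ s * S.delta (x*x) - (2:k) • (x ^ (s+1) * S.delta x)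
      + (2:k) • (x * S.delta (x ^ (s+1))) - x * (x * S.delta (x ^ s)) := by
  have hxx : x * x ∈ S.grading 0 := by
    haveI := S.graded; simpa using SetLike.mul_mem_graded hx hx
  have h := S.order_two 0 0 0 x hx x hx (x ^ s) (S.pow_mem hx s)
  have c1 := S.comm_pow hx (S.delta_odd 0 _ hxx) s
  have c3 := S.comm_pow hx (S.delta_odd 0 x hx) s
  have e1 : x * x * x ^ s = x ^ (s+2) := by rw [mul_assoc, ← pow_succ', ← pow_succ']
  have e2 : x * x ^ s = x ^ (s+1) := (pow_succ' x s).symm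
  have c2 : S.delta x * x ^ (s+1) = x ^ (s+1) * S.delta x :=
    S.comm_pow hx (S.delta_odd 0 x hx) (s+1)
  rw [e1, e2, c1, c3] at h
  rw [h]
  simp only [ZMod.val_zero, pow_zero, one_smul, mul_smul_comm, ← mul_assoc, ← pow_succ', c2]
  match_scalars <;> ring

lemma delta_pow (hx : x ∈ S.grading 0) : ∀ r : ℕ,
    S.delta (x ^ (r+2)) = (-(((r:k))^2 + 2*(r:k))) • (x ^ (r+1) * S.delta x)
      + ((((r:k))+2)*(((r:k))+1)/2) • (x ^ r * S.delta (x*x)) := by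
  have key : ∀ r : ℕ,
      (S.delta (x ^ (r+2)) = (-(((r:k))^2 + 2*(r:k))) • (x ^ (r+1) * S.delta x)
        + ((((r:k))+2)*(((r:k))+1)/2) • (x ^ r * S.delta (x*x)))
      ∧ (S.delta (x ^ (r+3)) = (-((((r:k))+1)^2 + 2*((r:k)+1))) • (x ^ (r+2) * S.delta x)
        + (((((r:k))+1)+2)*((((r:k))+1)+1)/2) • (x ^ (r+1) * S.delta (x*x))) := by
    intro r; induction r with
    | zero =>
      constructor
      · norm_num [pow_two]
      · have h := S.delta_rec hx 1
        norm_num at h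
        rw [show S.delta (x^2) = S.delta (x*x) by rw [pow_two]] at h
        norm_num [h]
        simp only [← mul_assoc, ← pow_two]
        match_scalars <;> norm_num
    | succ r ih =>
      refine ⟨?_, ?_⟩
      · push_cast
        exact ih.2
      push_cast
      have h := S.delta_rec hx (r+2)
      rw [show r+2+2 = r+4 from rfl, show r+2+1 = r+3 from rfl] at h
      rw [show r+1+3 = r+4 from rfl, show r+1+2 = r+3 from rfl, show r+1+1 = r+2 from rfl]
      rw [h, ih.1, ih.2]
      simp only [smul_add, mul_add, mul_sub, mul_smul_comm, smul_smul,
        ← mul_assoc, ← pow_succ', show r+2+1 = r+3 from rfl, show r+1+1 = r+2 from rfl]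
      match_scalars <;> push_cast <;> ring
  intro r; exact (key r).1
end DGBV

lemma dgbv_exp_shift {k A : Type*} [Field k] [CharZero k] [Ring A] [Algebra k A]
    (x y : A) (N : ℕ) (hy : x ^ N * y = 0) :
    ∑ s ∈ Finset.range N, (((s+1).factorial : k))⁻¹ • (x ^ (s+1) * y)
      = (∑ s ∈ Finset.range N, ((s.factorial : k))⁻¹ • (x ^ s * y)) - y := by
  have h1 := Finset.sum_range_succ' (fun t => ((t.factorial : k))⁻¹ • (x ^ t * y)) N
  have h2 := Finset.sum_range_succ (fun t => ((t.factorial : k))⁻¹ • (x ^ t * y)) N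
  rw [h2] at h1
  simp only [hy, smul_zero, add_zero, Nat.factorial_zero, Nat.cast_one, inv_one, pow_zero,
    one_mul, one_smul] at h1
  exact eq_sub_of_add_eq h1.symm

namespace DGBV
variable {k A : Type*} [Field k] [CharZero k] [Ring A] [Algebra k A] (S : DGBV k A) {x : A}

def Fterm (S : DGBV k A) (x : A) (r : ℕ) : A :=
  (r.factorial : k)⁻¹ • S.d (x ^ r) + (r.factorial : k)⁻¹ • S.delta (x ^ r)

lemma master_main (hx : x ∈ S.grading 0) {N : ℕ} (hN : x ^ N = 0) :
    S.d (∑ r ∈ Finset.range N, (r.factorial : k)⁻¹ • x ^ r)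
      + S.delta (∑ r ∈ Finset.range N, (r.factorial : k)⁻¹ • x ^ r)
      = (∑ r ∈ Finset.range N, (r.factorial : k)⁻¹ • x ^ r)
        * (S.d x + S.delta x + (2⁻¹ : k) • S.br 0 x x) := by
  have hpow : ∀ m, N ≤ m → x ^ m = 0 := fun m hm => pow_eq_zero_of_le hm hN
  have hvx : S.delta x * x = x * S.delta x := by
    simpa using S.comm_pow hx (S.delta_odd 0 x hx) 1
  have e0 : S.d (∑ r ∈ Finset.range N, (r.factorial : k)⁻¹ • x ^ r)
      + S.delta (∑ r ∈ Finset.range N, (r.factorial : k)⁻¹ • x ^ r)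
      = ∑ r ∈ Finset.range (N+1+1), S.Fterm x r := by
    simp only [map_sum, map_smul, Fterm, ← Finset.sum_add_distrib]
    rw [Finset.sum_range_succ, Finset.sum_range_succ, hpow N le_rfl, hpow (N+1) (by omega)]
    simp
  have e1 : ∑ r ∈ Finset.range (N+1+1), S.Fterm x r
      = S.Fterm x 0 + S.Fterm x 1 + ∑ s ∈ Finset.range N, S.Fterm x (s+1+1) := by
    rw [Finset.sum_range_succ' (fun r => S.Fterm x r) (N+1),
      Finset.sum_range_succ' (fun s => S.Fterm x (s+1)) N]
    simp only [show (0:ℕ)+1 = 1 from rfl]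
    abel
  have e2 : S.Fterm x 0 = 0 := by simp [Fterm, S.d_one, S.delta_one]
  have e3 : S.Fterm x 1 = S.d x + S.delta x := by simp [Fterm]
  have e4 : ∀ s ∈ Finset.range N, S.Fterm x (s+1+1)
      = ((s+1).factorial : k)⁻¹ • (x ^ (s+1) * S.d x)
        + ((((s+1).factorial : k)⁻¹ • (x ^ (s+1) * S.delta x))
            - (s.factorial : k)⁻¹ • (x ^ (s+1) * S.delta x))
        + (2⁻¹ * (s.factorial : k)⁻¹) • (x ^ s * S.delta (x*x)) := by
    intro s _
    have hd := S.d_pow hx (s+1)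
    have hD := S.delta_pow hx s
    rw [show s+1+1 = s+2 from rfl] at hd
    simp only [Fterm, show s+1+1 = s+2 from rfl, hd, hD]
    have f1 : ((s+1).factorial : k) = ((s:k)+1) * (s.factorial:k) := by
      rw [Nat.factorial_succ]; push_cast; ring
    have f2 : ((s+2).factorial : k) = ((s:k)+2) * (((s:k)+1) * (s.factorial:k)) := by
      rw [show s+2 = (s+1)+1 from rfl, Nat.factorial_succ, Nat.cast_mul, f1]; push_cast; ring
    have hs0 : (s.factorial : k) ≠ 0 := Nat.cast_ne_zero.mpr (Nat.factorial_ne_zero s)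
    have hs1 : ((s:k)+1) ≠ 0 := by
      have : ((s+1:ℕ):k) ≠ 0 := Nat.cast_ne_zero.mpr (by omega)
      push_cast at this; exact this
    have hs2 : ((s:k)+2) ≠ 0 := by
      have : ((s+2:ℕ):k) ≠ 0 := Nat.cast_ne_zero.mpr (by omega)
      push_cast at this; exact this
    match_scalars <;> simp only [f2, f1] <;> field_simp <;> ring
  have su : ∑ s ∈ Finset.range N, ((s+1).factorial : k)⁻¹ • (x ^ (s+1) * S.d x)
      = (∑ s ∈ Finset.range N, (s.factorial : k)⁻¹ • (x ^ s * S.d x)) - S.d x :=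
    dgbv_exp_shift x (S.d x) N (by rw [hN, zero_mul])
  have sv : ∑ s ∈ Finset.range N, ((s+1).factorial : k)⁻¹ • (x ^ (s+1) * S.delta x)
      = (∑ s ∈ Finset.range N, (s.factorial : k)⁻¹ • (x ^ s * S.delta x)) - S.delta x :=
    dgbv_exp_shift x (S.delta x) N (by rw [hN, zero_mul])
  have r2 : ∀ s ∈ Finset.range N,
      (s.factorial : k)⁻¹ • (x ^ s * (S.d x + S.delta x + (2⁻¹ : k) • S.br 0 x x))
      = (s.factorial : k)⁻¹ • (x ^ s * S.d x)
        + (((s.factorial : k)⁻¹ • (x ^ s * S.delta x))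
            - (s.factorial : k)⁻¹ • (x ^ (s+1) * S.delta x))
        + (2⁻¹ * (s.factorial : k)⁻¹) • (x ^ s * S.delta (x*x)) := by
    intro s _
    simp only [DGBV.br, pow_zero, one_smul, hvx]
    simp only [mul_add, mul_sub, mul_smul_comm, smul_sub, smul_add, ← mul_assoc, ← pow_succ]
    match_scalars <;> ring
  rw [e0, e1, e2, e3, Finset.sum_congr rfl e4, Finset.sum_add_distrib,
    Finset.sum_add_distrib, Finset.sum_sub_distrib, su, sv, Finset.sum_mul]
  simp only [smul_mul_assoc]
  rw [Finset.sum_congr rfl r2, Finset.sum_add_distrib, Finset.sum_add_distrib,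
    Finset.sum_sub_distrib]
  abel
end DGBV

/-- Master equation lemma: in any dGBV algebra, an even nilpotent element `S` (with `S^N = 0`)
satisfies the master equation `d(S) + Δ(S) + ½ [S • S] = 0` if and only if
`(d + Δ)(e^S) = 0`, where `e^S = Σ_{r=0}^{N−1} Sʳ/r!`. -/
theorem dgbv_master_equation_iff {k A : Type*} [Field k] [CharZero k] [Ring A] [Algebra k A]
    (S : DGBV k A) (x : A) (hx : x ∈ S.grading 0) (N : ℕ) (hN : x ^ N = 0) :
    S.d x + S.delta x + (2⁻¹ : k) • S.br 0 x x = 0 ↔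
      S.d (∑ r ∈ Finset.range N, (r.factorial : k)⁻¹ • x ^ r)
        + S.delta (∑ r ∈ Finset.range N, (r.factorial : k)⁻¹ • x ^ r) = 0 := by
  constructor
  · intro h
    rw [S.master_main hx hN, h, mul_zero]
  · intro h
    have main := S.master_main hx hN
    rw [h] at main
    rcases N with _ | m
    · have h1 : (1:A) = 0 := by simpa using hN
      calc S.d x + S.delta x + (2⁻¹:k) • S.br 0 x x
          = (S.d x + S.delta x + (2⁻¹:k) • S.br 0 x x) * 1 := (mul_one _).symm
        _ = 0 := by rw [h1, mul_zero]
    · set c := S.d x + S.delta x + (2⁻¹:k) • S.br 0 x x with hc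
      set p := ∑ s ∈ Finset.range m, ((s+1).factorial : k)⁻¹ • x ^ s with hp
      have hE : ∑ r ∈ Finset.range (m+1), (r.factorial : k)⁻¹ • x ^ r = 1 + x * p := by
        rw [Finset.sum_range_succ' (fun r => (r.factorial : k)⁻¹ • x ^ r) m]
        simp only [Nat.factorial_zero, Nat.cast_one, inv_one, pow_zero, one_smul]
        rw [hp, Finset.mul_sum]
        simp only [mul_smul_comm, ← pow_succ']
        exact add_comm _ _
      have h0 : (1 + x*p) * c = 0 := by rw [← hE]; exact main.symm
      have hstep : c = -(x*p) * c := by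
        rw [add_mul, one_mul] at h0
        rw [neg_mul]
        exact eq_neg_of_add_eq_zero_left h0
      have hkey : ∀ j : ℕ, c = (-(x*p))^j * c := by
        intro j; induction j with
        | zero => simp
        | succ j ih => rw [pow_succ', mul_assoc, ← ih, ← hstep]
      have hxp : Commute x p := by
        show x * p = p * x
        rw [hp, Finset.mul_sum, Finset.sum_mul]
        simp only [mul_smul_comm, smul_mul_assoc, ← pow_succ', ← pow_succ]
      have hnil : (-(x*p))^(m+1) = 0 := by
        rw [neg_pow, hxp.mul_pow, hN, zero_mul, mul_zero]
      rw [hkey (m+1), hnil, zero_mul]
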